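/- For all real a with 0 < a ≤ 1/2 and real x with 0 < x ≤ π/4, the function u(a,x) = a·(x − π)·cot(a·x) + π·cot(x) has strictly positive partial derivative in a; explicitly, ∂u/∂a = ((π − x)/(2·sin²(ax)))·(2ax − sin(2ax)) > 0. -/

import Mathlib

/-! Differentiating `t ↦ t (x - π) cot (t x)` gives `(x - π) (cot y - y / sin² y)` with `y = a x`,
and the double-angle formula turns `cot y - y / sin² y` into `-(2y - sin 2y) / (2 sin² y)`,
which is negative because `sin z < z` for `z > 0`. -/

open Real

theorem Real.hasDerivAt_cot {y : ℝ} (h : sin y ≠ 0) : HasDerivAt cot (-1 / sin y ^ 2) y := by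
  have hquot := (hasDerivAt_cos y).div (hasDerivAt_sin y) h
  rw [show cos / sin = cot from funext fun z => (cot_eq_cos_div_sin z).symm] at hquot
  refine hquot.congr_deriv ?_
  rw [← sin_sq_add_cos_sq y]
  ring

theorem Real.cot_sub_div_sin_sq {y : ℝ} (h : sin y ≠ 0) :
    cot y - y / sin y ^ 2 = -(2 * y - sin (2 * y)) / (2 * sin y ^ 2) := by
  rw [cot_eq_cos_div_sin, sin_two_mul]
  field_simp
  ring

theorem hasDerivAt_mul_mul_cot_mul (c x : ℝ) {a : ℝ} (h : sin (a * x) ≠ 0) :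
    HasDerivAt (fun t => t * c * cot (t * x)) (c * (cot (a * x) - a * x / sin (a * x) ^ 2)) a := by
  have hlin : HasDerivAt (fun t : ℝ => t * c) c a := by
    simpa using (hasDerivAt_id a).mul_const c
  have hscale : HasDerivAt (fun t : ℝ => t * x) x a := by
    simpa using (hasDerivAt_id a).mul_const x
  refine (hlin.mul ((hasDerivAt_cot h).comp a hscale)).congr_deriv ?_
  simp only [Function.comp_apply]
  ring

theorem u_deriv_pos (a x : ℝ) (ha : 0 < a) (ha' : a ≤ 1 / 2) (hx : 0 < x) (hx' : x ≤ π / 4) :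
    HasDerivAt (fun t : ℝ => t * (x - π) * Real.cot (t * x) + π * Real.cot x)
      ((π - x) / (2 * Real.sin (a * x) ^ 2) * (2 * a * x - Real.sin (2 * a * x))) a ∧
    (π - x) / (2 * Real.sin (a * x) ^ 2) * (2 * a * x - Real.sin (2 * a * x)) > 0 := by
  have hax : 0 < a * x := mul_pos ha hx
  have hsin : 0 < sin (a * x) := sin_pos_of_pos_of_lt_pi hax (by nlinarith [pi_pos])
  constructor
  · refine ((hasDerivAt_mul_mul_cot_mul (x - π) x hsin.ne').add_const (π * cot x)).congr_deriv ?_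
    rw [cot_sub_div_sin_sq hsin.ne', ← mul_assoc]
    ring
  · have hsin_lt : sin (2 * a * x) < 2 * a * x := sin_lt (by positivity)
    have hx_lt : x < π := by linarith [pi_pos]
    have : 0 < 2 * a * x - sin (2 * a * x) := by linarith
    have : 0 < π - x := by linarith
    positivity
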